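/- For every K > 0 there exists C > 0 such that the following holds: let ε ∈ (0, 1/2) and let w : ℝ² → ℝ be measurable with 0 ≤ w(x) ≤ K/ε² for almost every x and ∫_{ℝ²} w(x) dx = 1. If L > 0 is such that R := exp(C(1 + L)) satisfies R ≤ 1/ε, then any two points x₁, x₂ ∈ ℝ² with Gw(x₁) ≥ log(1/ε) − L and Gw(x₂) ≥ log(1/ε) − L satisfy |x₁ − x₂| ≤ 2Rε. In particular, the superlevel set {x : Gw(x) > log(1/ε) − L} has diameter at most 2Rε. -/

import Mathlib

open MeasureTheory Real intervalIntegral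

/-- Euclidean norm on `ℝ²`. -/
noncomputable def vnorm (x : ℝ × ℝ) : ℝ := Real.sqrt (x.1 ^ 2 + x.2 ^ 2)

/-- Rotation `R_a` on `ℝ²`. -/
noncomputable def vrot (a : ℝ) (x : ℝ × ℝ) : ℝ × ℝ :=
  (x.1 * Real.cos a + x.2 * Real.sin a, -x.1 * Real.sin a + x.2 * Real.cos a)

/-- Japanese bracket `⟨x⟩ = √(1+|x|²)` on `ℝ²`. -/
noncomputable def jap (x : ℝ × ℝ) : ℝ := Real.sqrt (1 + x.1 ^ 2 + x.2 ^ 2)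

/-- The truncated logarithmic potential
`Gw(x) = ∫ log(1/|x−y|) 1_{|x−y|≤1} w(y) dy`. -/
noncomputable def Gfun (w : ℝ × ℝ → ℝ) (x : ℝ × ℝ) : ℝ :=
  ∫ y : ℝ × ℝ, (if vnorm (x - y) ≤ 1 then Real.log (1 / vnorm (x - y)) else 0) * w y

/-!
Cut `log (1/|z|)` at the scales `ε ≤ r = Rε`: for `|z| ≤ ε` it is at most `log (1/ε) + ε/|z|`
(by `log t ≤ t - 1`), for `ε < |z| ≤ r` at most `log (1/ε)`, and beyond `r` at most
`log (1/ε) - log R`. Integrating against `0 ≤ w ≤ K/ε²`, with `∫_{|z| ≤ ε} |z|⁻¹ = 2πε`, gives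
`Gw(x) ≤ log (1/ε) + 2πK - log R · m(x)`, where `m(x)` is the mass of `w` at distance `> r`
from `x`. On the superlevel set this forces `C (1 + L) m(x) ≤ 2πK + L`. If `|x₁ - x₂| > 2r`,
every point is far from `x₁` or from `x₂`, so `m(x₁) + m(x₂) ≥ 1`, which is impossible for
`C = 4πK + 2`.
-/

open Set

lemma vnorm_eq_norm_equivRealProdCLM_symm (x : ℝ × ℝ) :
    vnorm x = ‖Complex.equivRealProdCLM.symm x‖ := by
  simp [vnorm, Complex.norm_def, Complex.normSq_apply, sq]

lemma vnorm_nonneg (x : ℝ × ℝ) : 0 ≤ vnorm x := Real.sqrt_nonneg _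

lemma continuous_vnorm : Continuous vnorm := by
  simp only [funext vnorm_eq_norm_equivRealProdCLM_symm]
  fun_prop

lemma vnorm_sub_le_add (x₁ x₂ y : ℝ × ℝ) : vnorm (x₁ - x₂) ≤ vnorm (x₁ - y) + vnorm (x₂ - y) := by
  simp only [vnorm_eq_norm_equivRealProdCLM_symm, map_sub]
  simpa only [dist_eq_norm] using dist_triangle_right (Complex.equivRealProdCLM.symm x₁)
    (Complex.equivRealProdCLM.symm x₂) (Complex.equivRealProdCLM.symm y)

lemma integral_comp_vnorm (f : ℝ → ℝ) : ∫ z : ℝ × ℝ, f (vnorm z) = ∫ z : ℂ, f (‖z‖) := by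
  simp only [vnorm_eq_norm_equivRealProdCLM_symm]
  exact Complex.volume_preserving_equiv_real_prod.symm.integral_comp' (fun z : ℂ => f (‖z‖))

lemma integrable_comp_vnorm_iff (f : ℝ → ℝ) :
    Integrable (fun z : ℝ × ℝ => f (vnorm z)) ↔ Integrable (fun z : ℂ => f (‖z‖)) := by
  simp only [vnorm_eq_norm_equivRealProdCLM_symm]
  exact Complex.volume_preserving_equiv_real_prod.symm.integrable_comp_emb
    Complex.measurableEquivRealProd.symm.measurableEmbedding (g := fun z : ℂ => f (‖z‖))

lemma pow_finrank_sub_one_smul_inv_eq_indicator {ρ y : ℝ} (hy : 0 < y) :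
    y ^ (Module.finrank ℝ ℂ - 1) • (if y ≤ ρ then y⁻¹ else 0)
      = (Iic ρ).indicator (fun _ => 1) y := by
  by_cases h : y ≤ ρ <;> simp [h, Complex.finrank_real_complex, hy.ne']

lemma Complex.integrable_inv_norm_closedBall (ρ : ℝ) :
    Integrable (fun z : ℂ => if ‖z‖ ≤ ρ then ‖z‖⁻¹ else 0) := by
  rw [integrable_fun_norm_addHaar volume (f := fun y => if y ≤ ρ then y⁻¹ else 0),
    integrableOn_congr_fun (fun y (hy : y ∈ Ioi 0) =>
      pow_finrank_sub_one_smul_inv_eq_indicator (ρ := ρ) hy) measurableSet_Ioi,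
    IntegrableOn, integrable_indicator_iff measurableSet_Iic]
  exact integrableOn_const (by simp [Measure.restrict_apply' measurableSet_Ioi, Iic_inter_Ioi])

lemma Complex.integral_inv_norm_closedBall {ρ : ℝ} (hρ : 0 ≤ ρ) :
    ∫ z : ℂ, (if ‖z‖ ≤ ρ then ‖z‖⁻¹ else 0) = 2 * π * ρ := by
  rw [integral_fun_norm_addHaar volume (fun y => if y ≤ ρ then y⁻¹ else 0),
    setIntegral_congr_fun measurableSet_Ioi (fun y (hy : y ∈ Ioi 0) =>
      pow_finrank_sub_one_smul_inv_eq_indicator hy),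
    setIntegral_indicator measurableSet_Iic, Ioi_inter_Iic, setIntegral_const,
    Real.volume_real_Ioc_of_le hρ, Complex.finrank_real_complex, Measure.real, Complex.volume_ball]
  simp only [ENNReal.ofReal_one, one_pow, one_mul, ENNReal.coe_toReal, NNReal.coe_real_pi, sub_zero,
    smul_eq_mul, mul_one, nsmul_eq_mul, Nat.cast_ofNat]
  ring

lemma integrable_inv_vnorm_sub_closedBall (x : ℝ × ℝ) (ρ : ℝ) :
    Integrable (fun y => if vnorm (x - y) ≤ ρ then (vnorm (x - y))⁻¹ else 0) :=
  ((integrable_comp_vnorm_iff (fun v => if v ≤ ρ then v⁻¹ else 0)).2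
    (Complex.integrable_inv_norm_closedBall ρ)).comp_sub_left x

lemma integral_inv_vnorm_sub_closedBall (x : ℝ × ℝ) {ρ : ℝ} (hρ : 0 ≤ ρ) :
    ∫ y, (if vnorm (x - y) ≤ ρ then (vnorm (x - y))⁻¹ else 0) = 2 * π * ρ := by
  rw [integral_sub_left_eq_self (fun z => if vnorm z ≤ ρ then (vnorm z)⁻¹ else 0),
    integral_comp_vnorm (fun v => if v ≤ ρ then v⁻¹ else 0),
    Complex.integral_inv_norm_closedBall hρ]

lemma measurableSet_lt_vnorm_sub (x : ℝ × ℝ) (r : ℝ) : MeasurableSet {y | r < vnorm (x - y)} :=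
  measurableSet_lt measurable_const
    (continuous_vnorm.comp (continuous_const.sub continuous_id)).measurable

lemma setOf_lt_vnorm_sub_union_eq_univ {x₁ x₂ : ℝ × ℝ} {r : ℝ} (h : 2 * r < vnorm (x₁ - x₂)) :
    {y | r < vnorm (x₁ - y)} ∪ {y | r < vnorm (x₂ - y)} = univ := by
  refine eq_univ_of_forall fun y => ?_
  by_contra! hy
  simp only [mem_union, mem_ofPred_eq, not_or, not_lt] at hy
  linarith [vnorm_sub_le_add x₁ x₂ y]

-- `logKernel 0 = 0`, as `1 / 0 = 0` and `log 0 = 0`.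
noncomputable def logKernel (z : ℝ × ℝ) : ℝ := if vnorm z ≤ 1 then log (1 / vnorm z) else 0

lemma Gfun_eq_integral_logKernel (w : ℝ × ℝ → ℝ) (x : ℝ × ℝ) :
    Gfun w x = ∫ y, logKernel (x - y) * w y := rfl

lemma logKernel_nonneg (z : ℝ × ℝ) : 0 ≤ logKernel z := by
  unfold logKernel
  split_ifs with h
  · rw [one_div, log_inv, neg_nonneg]
    exact log_nonpos (vnorm_nonneg z) h
  · exact le_rfl

lemma logKernel_le {ε r : ℝ} (hε : 0 < ε) (hεr : ε ≤ r) (hr : r ≤ 1) (z : ℝ × ℝ) :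
    logKernel z ≤ log (1 / ε) + ε * (if vnorm z ≤ ε then (vnorm z)⁻¹ else 0)
      - (if r < vnorm z then log (r / ε) else 0) := by
  have hr0 : 0 < r := hε.trans_le hεr
  have hv := vnorm_nonneg z
  unfold logKernel
  simp only [one_div, log_inv, log_div hr0.ne' hε.ne']
  set v := vnorm z
  rcases le_or_gt v ε with hvε | hεv
  · rw [if_pos (hvε.trans (hεr.trans hr)), if_pos hvε, if_neg (by linarith), sub_zero]
    rcases hv.eq_or_lt with hv0 | hv0
    · rw [← hv0, log_zero, inv_zero]
      linarith [log_nonpos hε.le (by linarith)]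
    · -- `log t ≤ t - 1` at `t = ε / v`
      have hlog := log_le_sub_one_of_pos (div_pos hε hv0)
      rw [log_div hε.ne' hv0.ne', div_eq_mul_inv] at hlog
      linarith
  · rw [if_neg hεv.not_ge, mul_zero, add_zero]
    rcases le_or_gt v r with hvr | hrv
    · rw [if_pos (hvr.trans hr), if_neg hvr.not_gt, sub_zero]
      exact neg_le_neg (log_le_log hε hεv.le)
    · rw [if_pos hrv]
      split_ifs
      · linarith [log_le_log hr0 hrv.le]
      · linarith [log_nonpos hr0.le hr]

lemma integral_le_setIntegral_add_setIntegral {α : Type*} [MeasurableSpace α] {μ : Measure α}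
    {f : α → ℝ} (hf : 0 ≤ᵐ[μ] f) (hfi : Integrable f μ) {s t : Set α} (hs : MeasurableSet s)
    (ht : MeasurableSet t) (hst : s ∪ t = univ) :
    ∫ a, f a ∂μ ≤ ∫ a in s, f a ∂μ + ∫ a in t, f a ∂μ := by
  rw [← MeasureTheory.integral_indicator hs, ← MeasureTheory.integral_indicator ht,
    ← integral_add (hfi.indicator hs) (hfi.indicator ht)]
  refine integral_mono_ae hfi ((hfi.indicator hs).add (hfi.indicator ht)) ?_
  filter_upwards [hf] with a (ha : 0 ≤ f a)
  classical
  rcases (hst ▸ mem_univ a : a ∈ s ∪ t) with h | h <;>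
    simp only [indicator_apply] <;> split_ifs <;> linarith

lemma Gfun_le {w : ℝ × ℝ → ℝ} {M ε r : ℝ} (hε : 0 < ε) (hεr : ε ≤ r) (hr : r ≤ 1)
    (hwb : ∀ᵐ y, 0 ≤ w y ∧ w y ≤ M) (hwi : Integrable w) (hw1 : ∫ y, w y = 1) (x : ℝ × ℝ) :
    Gfun w x ≤ log (1 / ε) + 2 * π * M * ε ^ 2
      - log (r / ε) * ∫ y in {y | r < vnorm (x - y)}, w y := by
  set far := {y | r < vnorm (x - y)}
  have hfar := measurableSet_lt_vnorm_sub x r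
  have hinv := integrable_inv_vnorm_sub_closedBall x ε
  calc Gfun w x
      = ∫ y, logKernel (x - y) * w y := Gfun_eq_integral_logKernel w x
    _ ≤ ∫ y, (log (1 / ε) * w y
          + M * ε * (if vnorm (x - y) ≤ ε then (vnorm (x - y))⁻¹ else 0)
          - log (r / ε) * far.indicator w y) := by
        refine integral_mono_of_nonneg ?_ ?_ ?_
        · filter_upwards [hwb] with y hy using mul_nonneg (logKernel_nonneg _) hy.1
        · exact ((hwi.const_mul _).add (hinv.const_mul _)).sub ((hwi.indicator hfar).const_mul _)
        filter_upwards [hwb] with y ⟨hw0, hwM⟩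
        have hker := mul_le_mul_of_nonneg_right (logKernel_le hε hεr hr (x - y)) hw0
        have hinvw := mul_le_mul_of_nonneg_left hwM
          (show 0 ≤ ε * (if vnorm (x - y) ≤ ε then (vnorm (x - y))⁻¹ else 0) by
            split_ifs
            exacts [mul_nonneg hε.le (inv_nonneg.2 (vnorm_nonneg _)), by simp])
        simp only [far, indicator_apply, mem_ofPred_eq] at hker hinvw ⊢
        split_ifs at hker hinvw ⊢ <;> linarith
    _ = log (1 / ε) + 2 * π * M * ε ^ 2 - log (r / ε) * ∫ y in far, w y := by
        rw [MeasureTheory.integral_sub, MeasureTheory.integral_add,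
          MeasureTheory.integral_const_mul, MeasureTheory.integral_const_mul,
          MeasureTheory.integral_const_mul, integral_inv_vnorm_sub_closedBall x hε.le,
          MeasureTheory.integral_indicator hfar, hw1]
        · ring
        exacts [hwi.const_mul _, hinv.const_mul _, (hwi.const_mul _).add (hinv.const_mul _),
          (hwi.indicator hfar).const_mul _]

/-- any two points of the superlevel set
`{Gw > log(1/ε) − L}` are within distance `2Rε`, where `R = exp(C(1+L))`. -/
theorem stmt_15 : ∀ K > (0:ℝ), ∃ C > (0:ℝ), ∀ ε : ℝ, ε ∈ Set.Ioo (0:ℝ) (1/2) →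
    ∀ w : ℝ × ℝ → ℝ, Measurable w →
    (∀ᵐ x : ℝ × ℝ, 0 ≤ w x ∧ w x ≤ K / ε ^ 2) →
    Integrable w → (∫ x : ℝ × ℝ, w x) = 1 →
    ∀ L > (0:ℝ), Real.exp (C * (1 + L)) ≤ 1 / ε →
    ∀ x₁ x₂ : ℝ × ℝ,
      Real.log (1 / ε) - L ≤ Gfun w x₁ → Real.log (1 / ε) - L ≤ Gfun w x₂ →
      vnorm (x₁ - x₂) ≤ 2 * Real.exp (C * (1 + L)) * ε := by
  intro K hK
  refine ⟨4 * π * K + 2, by positivity, ?_⟩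
  intro ε ⟨hε, _⟩ w _ hwb hwi hw1 L hL hR x₁ x₂ hx₁ hx₂
  set C := 4 * π * K + 2
  set R := exp (C * (1 + L))
  have hεr : ε ≤ R * ε := le_mul_of_one_le_left hε.le (one_le_exp (by positivity))
  have hr : R * ε ≤ 1 := (le_div_iff₀ hε).1 hR
  have hlogR : log (R * ε / ε) = C * (1 + L) := by rw [mul_div_cancel_right₀ _ hε.ne', log_exp]
  have hKε : 2 * π * (K / ε ^ 2) * ε ^ 2 = 2 * π * K := by field_simp
  by_contra! hfar
  have hcover := integral_le_setIntegral_add_setIntegral (hwb.mono fun _ h => h.1) hwi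
    (measurableSet_lt_vnorm_sub x₁ (R * ε)) (measurableSet_lt_vnorm_sub x₂ (R * ε))
    (setOf_lt_vnorm_sub_union_eq_univ (by linarith))
  have h₁ := hx₁.trans (Gfun_le hε hεr hr hwb hwi hw1 x₁)
  have h₂ := hx₂.trans (Gfun_le hε hεr hr hwb hwi hw1 x₂)
  rw [hlogR, hKε] at h₁ h₂
  have hsum := mul_le_mul_of_nonneg_left hcover (by positivity : 0 ≤ C * (1 + L))
  rw [hw1, mul_one, mul_add] at hsum
  have hC : C * (1 + L) = 4 * π * K + 2 * L + 2 + 4 * (π * K * L) := by ring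
  linarith [mul_pos (mul_pos pi_pos hK) hL]
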